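/- With (V,d) as above, the single 1-cocycle d_1 = x_4 ∂/∂x_6 yields a non-trivial polynomial deformation of order 1: d_t = d + t d_1 satisfies d_t² = 0, and (V[[t]], d_t) is not equivalent to (V[[t]], d). -/
import Mathlib


open Finset

/-- The k[[t]]-linear extension to V[[t]] ≅ (ℕ → V) of a formal power series
`∑ tⁱ D i` of k-linear endomorphisms of `V` (Cauchy-product action on coefficients). -/
noncomputable def ext {k V : Type*} [Field k] [AddCommGroup V] [Module k V]
    (D : ℕ → Module.End k V) : Module.End k (ℕ → V) where
  toFun v n := ∑ i ∈ Finset.range (n + 1), D i (v (n - i))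
  map_add' u v := by
    funext n
    simp [Finset.sum_add_distrib]
  map_smul' c v := by
    funext n
    simp [Finset.smul_sum]

/-- The trivial deformation `d_t = d` of a differential `d`. -/
noncomputable def trivDef {k V : Type*} [Field k] [AddCommGroup V] [Module k V]
    (d : Module.End k V) : ℕ → Module.End k V :=
  fun n => if n = 0 then d else 0

/-- Equivalence of deformations: a k[[t]]-linear automorphism `φ_t` of `V[[t]]` with
`φ_t ≡ Id (mod t)` and `d_t φ_t = φ_t d_t'`. -/
def IsEquivDef {k V : Type*} [Field k] [AddCommGroup V] [Module k V]
    (D D' : ℕ → Module.End k V) : Prop :=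
  ∃ Φ : ℕ → Module.End k V, Φ 0 = 1 ∧ Function.Bijective (ext Φ) ∧
    ext D * ext Φ = ext Φ * ext D'

/-- The basis vector `x_i` of the graded module `V = ⊕_{p≥1} ⟨x_{2p-1}, x_{2p}⟩`,
modelled inside `ℕ →₀ k` (only indices `i ≥ 1` are used). -/
noncomputable def xv (k : Type*) [Field k] (i : ℕ) : ℕ →₀ k := Finsupp.single i 1

/-- The elementary operator `x_i ∂/∂x_j`, sending `x_j ↦ x_i` and all other
basis vectors to `0`. -/
noncomputable def Elem (k : Type*) [Field k] (i j : ℕ) : Module.End k (ℕ →₀ k) :=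
  (Finsupp.lsingle i).comp (Finsupp.lapply j)

/-- The degree-`p` homogeneous piece `V_p = ⟨x_{2p-1}, x_{2p}⟩` (and `V_p = 0` for `p ≤ 0`). -/
noncomputable def piece (k : Type*) [Field k] (p : ℕ) : Submodule k (ℕ →₀ k) :=
  if p = 0 then ⊥ else Submodule.span k {xv k (2 * p - 1), xv k (2 * p)}

/-- Unfolding lemma for `ext`. -/
lemma ext_apply {k V : Type*} [Field k] [AddCommGroup V] [Module k V]
    (D : ℕ → Module.End k V) (v : ℕ → V) (n : ℕ) :
    ext D v n = ∑ i ∈ Finset.range (n + 1), D i (v (n - i)) := rfl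

/-- With `d : x_{6i-3} ↦ x_{6i-5}`, the 1-cocycle `d_1 = x_4 ∂/∂x_6` yields a non-trivial
polynomial deformation of order 1: `d_t = d + t d_1` satisfies `d_t² = 0`, `d_1 ≠ 0`, and
`(V[[t]], d_t)` is not equivalent to the trivial deformation `(V[[t]], d)`. -/
theorem example_nontrivial_linear_deformation {k : Type*} [Field k]
    (d d1 : Module.End k (ℕ →₀ k))
    (hd : ∀ j : ℕ, d (xv k j) = if j % 6 = 3 then xv k (j - 2) else 0)
    (hd1 : ∀ j : ℕ, d1 (xv k j) = if j = 6 then xv k 4 else 0) :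
    d1 ≠ 0 ∧
    ext (fun m => if m = 0 then d else if m = 1 then d1 else 0) *
      ext (fun m => if m = 0 then d else if m = 1 then d1 else 0) = 0 ∧
    ¬ IsEquivDef (fun m => if m = 0 then d else if m = 1 then d1 else 0) (trivDef d) := by
  set Dm : ℕ → Module.End k (ℕ →₀ k) :=
    (fun m => if m = 0 then d else if m = 1 then d1 else 0) with hDm
  -- single j b = b • xv k j
  have hsingle : ∀ (j : ℕ) (b : k), Finsupp.single j b = b • xv k j := by
    intro j b
    rw [xv, Finsupp.smul_single, smul_eq_mul, mul_one]
  have hdd : ∀ x, d (d x) = 0 := by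
    have : d ∘ₗ d = 0 := by
      apply Finsupp.lhom_ext
      intro j b
      simp only [LinearMap.comp_apply, LinearMap.zero_apply, hsingle, map_smul, hd]
      by_cases h : j % 6 = 3
      · have h2 : (j - 2) % 6 = 1 := by omega
        simp [h, hd, h2]
      · simp [h]
    exact fun x => LinearMap.ext_iff.mp this x
  have hdd1 : ∀ x, d (d1 x) = 0 := by
    have : d ∘ₗ d1 = 0 := by
      apply Finsupp.lhom_ext
      intro j b
      simp only [LinearMap.comp_apply, LinearMap.zero_apply, hsingle, map_smul, hd1]
      by_cases h : j = 6
      · simp [h, hd]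
      · simp [h]
    exact fun x => LinearMap.ext_iff.mp this x
  have hd1d : ∀ x, d1 (d x) = 0 := by
    have : d1 ∘ₗ d = 0 := by
      apply Finsupp.lhom_ext
      intro j b
      simp only [LinearMap.comp_apply, LinearMap.zero_apply, hsingle, map_smul, hd]
      by_cases h : j % 6 = 3
      · have h2 : j - 2 ≠ 6 := by omega
        simp [h, hd1, h2]
      · simp [h]
    exact fun x => LinearMap.ext_iff.mp this x
  have hd1d1 : ∀ x, d1 (d1 x) = 0 := by
    have : d1 ∘ₗ d1 = 0 := by
      apply Finsupp.lhom_ext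
      intro j b
      simp only [LinearMap.comp_apply, LinearMap.zero_apply, hsingle, map_smul, hd1]
      by_cases h : j = 6
      · simp [h, hd1]
      · simp [h]
    exact fun x => LinearMap.ext_iff.mp this x
  have hcomp : ∀ (i j : ℕ) (x : ℕ →₀ k), Dm i (Dm j x) = 0 := by
    intro i j x
    rcases Nat.lt_or_ge i 2 with hi | hi
    · rcases Nat.lt_or_ge j 2 with hj | hj
      · interval_cases i <;> interval_cases j <;>
          simp [hDm, hdd x, hdd1 x, hd1d x, hd1d1 x]
      · have : Dm j = 0 := by
          simp only [hDm]; rw [if_neg (by omega), if_neg (by omega)]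
        simp [this]
    · have : Dm i = 0 := by
        simp only [hDm]; rw [if_neg (by omega), if_neg (by omega)]
      simp [this]
  -- coordinate-4 of anything in the image of d vanishes
  have hcoord4 : ∀ w : ℕ →₀ k, d w 4 = 0 := by
    have : (Finsupp.lapply (M := k) (R := k) 4) ∘ₗ d = 0 := by
      apply Finsupp.lhom_ext
      intro j b
      simp only [LinearMap.comp_apply, LinearMap.zero_apply, hsingle, map_smul, hd]
      by_cases h : j % 6 = 3
      · have h2 : j - 2 ≠ 4 := by omega
        simp [h, xv, Finsupp.lapply_apply, Finsupp.single_apply, h2]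
      · simp [h]
    intro w
    exact LinearMap.ext_iff.mp this w
  refine ⟨?_, ?_, ?_⟩
  · intro h
    have h6 := hd1 6
    rw [h] at h6
    simp only [LinearMap.zero_apply, eq_self_iff_true, if_true, xv] at h6
    exact one_ne_zero (Finsupp.single_eq_zero.mp h6.symm)
  · apply LinearMap.ext
    intro v
    funext n
    show ext Dm (ext Dm v) n = 0
    rw [ext_apply]
    apply Finset.sum_eq_zero
    intro i _
    rw [ext_apply, map_sum]
    apply Finset.sum_eq_zero
    intro j _
    exact hcomp i j _
  · rintro ⟨Φ, hΦ0, -, heq⟩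
    set v : ℕ → (ℕ →₀ k) := fun n => if n = 0 then xv k 6 else 0 with hv
    have hLR : (ext Dm * ext Φ) v 1 = (ext Φ * ext (trivDef d)) v 1 := by rw [heq]
    have hd6 : d (xv k 6) = 0 := by rw [hd]; norm_num
    have htriv : ext (trivDef d) v = 0 := by
      funext n
      rw [ext_apply]
      apply Finset.sum_eq_zero
      intro i hi
      rcases Nat.eq_zero_or_pos i with h0 | h0
      · subst h0
        simp only [trivDef, if_pos rfl]
        rcases Nat.eq_zero_or_pos n with hn | hn
        · simp [hv, hn, hd6]
        · simp [hv, Nat.pos_iff_ne_zero.mp hn]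
      · simp [trivDef, Nat.pos_iff_ne_zero.mp h0]
    have hRHS : (ext Φ * ext (trivDef d)) v 1 = 0 := by
      rw [Module.End.mul_apply, htriv, map_zero]
      rfl
    have hEv1 : ext Φ v 1 = Φ 1 (xv k 6) := by
      rw [ext_apply]
      rw [Finset.sum_range_succ, Finset.sum_range_one]
      simp [hv]
    have hEv0 : ext Φ v 0 = xv k 6 := by
      rw [ext_apply, Finset.sum_range_one]
      simp [hv, hΦ0]
    have hLHS : (ext Dm * ext Φ) v 1 = d (Φ 1 (xv k 6)) + xv k 4 := by
      rw [Module.End.mul_apply, ext_apply, Finset.sum_range_succ, Finset.sum_range_one]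
      simp only [hDm]
      norm_num
      rw [hEv1, hEv0, hd1]
      norm_num
    rw [hLHS, hRHS] at hLR
    have := congrArg (fun w : ℕ →₀ k => w 4) hLR
    simp only [Finsupp.add_apply, hcoord4, zero_add, Finsupp.coe_zero, Pi.zero_apply] at this
    simp [xv, Finsupp.single_apply] at this
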